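/- Let c(t) = (cosh t - 1)² and define L_n = ∫_{-1}^{t_n} √((1 + c(t)²)/c(t)) dt for a sequence t_n ∈ (-1, 0) with t_n → 0. Then L_n → +∞ as n → ∞. -/

import Mathlib

open Real Filter Set intervalIntegral

noncomputable def carterG (s : ℝ) : ℝ := -Real.sinh s / (Real.cosh s - 1)

lemma carter_cosh_sub_one_pos {s : ℝ} (hs : s ≠ 0) : 0 < Real.cosh s - 1 := by
  have := (Real.one_lt_cosh (x := s)).mpr hs
  linarith

lemma carterG_hasDerivAt {s : ℝ} (hs : s ≠ 0) :
    HasDerivAt carterG (1 / (Real.cosh s - 1)) s := by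
  have hd : Real.cosh s - 1 ≠ 0 := (carter_cosh_sub_one_pos hs).ne'
  have h := ((Real.hasDerivAt_sinh s).neg.div ((Real.hasDerivAt_cosh s).sub_const 1) hd)
  convert h using 1
  · rfl
  · rfl
  · funext x; simp [carterG]
  have h1 : Real.cosh s ^ 2 - Real.sinh s ^ 2 = 1 := Real.cosh_sq_sub_sinh_sq s
  simp only [Pi.neg_apply]
  field_simp
  nlinarith [h1]

lemma carter_pointwise {s : ℝ} (hs : s ≠ 0) :
    1 / (Real.cosh s - 1) ≤
      Real.sqrt ((1 + ((Real.cosh s - 1)^2)^2) / (Real.cosh s - 1)^2) := by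
  have hc := carter_cosh_sub_one_pos hs
  have h1 : 1 / (Real.cosh s - 1) = Real.sqrt (1 / (Real.cosh s - 1)^2) := by
    rw [one_div ((Real.cosh s - 1)^2), ← inv_pow, Real.sqrt_sq (by positivity), one_div]
  rw [h1]
  apply Real.sqrt_le_sqrt
  gcongr
  nlinarith [sq_nonneg ((Real.cosh s - 1)^2)]

theorem carter_lengths_tendsto_atTop (t : ℕ → ℝ) (ht : ∀ n, t n ∈ Set.Ioo (-1 : ℝ) 0)
    (htend : Filter.Tendsto t Filter.atTop (nhds 0)) :
    Filter.Tendsto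
      (fun n => ∫ s in (-1 : ℝ)..(t n),
        Real.sqrt ((1 + ((Real.cosh s - 1)^2)^2) / (Real.cosh s - 1)^2))
      Filter.atTop Filter.atTop := by
  have key : ∀ n, carterG (t n) - carterG (-1) ≤
      ∫ s in (-1:ℝ)..(t n),
        Real.sqrt ((1 + ((Real.cosh s - 1)^2)^2) / (Real.cosh s - 1)^2) := by
    intro n
    obtain ⟨h1, h2⟩ := ht n
    have hle : (-1:ℝ) ≤ t n := h1.le
    have hne : ∀ s ∈ Set.uIcc (-1:ℝ) (t n), s ≠ 0 := by
      intro s hs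
      rw [Set.uIcc_of_le hle] at hs
      exact ne_of_lt (lt_of_le_of_lt hs.2 h2)
    have hcont : ContinuousOn
        (fun s => Real.sqrt ((1 + ((Real.cosh s - 1)^2)^2) / (Real.cosh s - 1)^2))
        (Set.uIcc (-1:ℝ) (t n)) := by
      apply ContinuousOn.sqrt
      apply ContinuousOn.div (by fun_prop) (by fun_prop)
      intro s hs
      exact pow_ne_zero 2 (carter_cosh_sub_one_pos (hne s hs)).ne'
    have hcont2 : ContinuousOn (fun s => 1 / (Real.cosh s - 1))
        (Set.uIcc (-1:ℝ) (t n)) := by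
      apply ContinuousOn.div (by fun_prop) (by fun_prop)
      intro s hs
      exact (carter_cosh_sub_one_pos (hne s hs)).ne'
    have hint1 := hcont.intervalIntegrable (μ := MeasureTheory.volume)
    have hint2 := hcont2.intervalIntegrable (μ := MeasureTheory.volume)
    have hftc : ∫ s in (-1:ℝ)..(t n), 1 / (Real.cosh s - 1)
        = carterG (t n) - carterG (-1) :=
      intervalIntegral.integral_eq_sub_of_hasDerivAt
        (fun s hs => carterG_hasDerivAt (hne s hs)) hint2
    rw [← hftc]
    apply intervalIntegral.integral_mono_on hle hint2 hint1
    intro s hs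
    refine carter_pointwise (hne s ?_)
    rwa [Set.uIcc_of_le hle]
  have hG : Filter.Tendsto (fun n => carterG (t n)) Filter.atTop Filter.atTop := by
    have hlt : Filter.Tendsto t Filter.atTop (nhdsWithin 0 (Set.Iio 0)) :=
      tendsto_nhdsWithin_of_tendsto_nhds_of_eventually_within _ htend
        (Filter.Eventually.of_forall fun n => (ht n).2)
    have hs2 : Filter.Tendsto (fun x : ℝ => -Real.sinh (x/2))
        (nhdsWithin 0 (Set.Iio 0)) (nhdsWithin 0 (Set.Ioi 0)) := by
      apply tendsto_nhdsWithin_of_tendsto_nhds_of_eventually_within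
      · have hc : Continuous fun x : ℝ => -Real.sinh (x/2) := by fun_prop
        simpa using (hc.tendsto 0).mono_left nhdsWithin_le_nhds
      · filter_upwards [self_mem_nhdsWithin] with x hx
        simp only [Set.mem_Ioi]
        have hsx : Real.sinh (x/2) < 0 := by
          rw [← Real.sinh_zero]
          exact Real.sinh_lt_sinh.mpr (by simp only [Set.mem_Iio] at hx; linarith)
        linarith
    have hinv := hs2.inv_tendsto_nhdsGT_zero
    have hcosh : Filter.Tendsto (fun x : ℝ => Real.cosh (x/2))
        (nhdsWithin 0 (Set.Iio 0)) (nhds 1) := by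
      have hc : Continuous fun x : ℝ => Real.cosh (x/2) := by fun_prop
      simpa using (hc.tendsto 0).mono_left nhdsWithin_le_nhds
    have hmul := Filter.Tendsto.pos_mul_atTop one_pos hcosh hinv
    have hGid : Filter.Tendsto carterG (nhdsWithin 0 (Set.Iio 0)) Filter.atTop := by
      apply hmul.congr'
      filter_upwards [self_mem_nhdsWithin] with x hx
      simp only [Set.mem_Iio] at hx
      have hsx : Real.sinh (x/2) < 0 := by
        rw [← Real.sinh_zero]
        exact Real.sinh_lt_sinh.mpr (by linarith)
      have e1 : Real.sinh x = 2 * Real.sinh (x/2) * Real.cosh (x/2) := by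
        rw [← Real.sinh_two_mul]; ring_nf
      have e2 : Real.cosh x - 1 = 2 * Real.sinh (x/2)^2 := by
        have hc2 : Real.cosh x = Real.cosh (x/2)^2 + Real.sinh (x/2)^2 := by
          rw [← Real.cosh_two_mul]; ring_nf
        have := Real.cosh_sq (x/2)
        linarith
      unfold carterG
      rw [e1, e2]
      simp only [Pi.inv_apply]
      field_simp [hsx.ne]
    exact hGid.comp hlt
  have hG' := Filter.tendsto_atTop_add_const_right Filter.atTop (-(carterG (-1))) hG
  refine Filter.tendsto_atTop_mono (fun n => ?_) hG'
  simpa [sub_eq_add_neg] using key n
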